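/- arXiv:2007.07461 — 3 statements merged into one kernel-verified Lean document; each statement's English description precedes it below -/
import Mathlib

section
/- Let P be a row-stochastic matrix over a finite set and γ ∈ [0,1). Then for every entrywise-nonnegative vector v, ‖(I - γP)⁻¹ v‖_∞ ≤ 2 ‖(I - γ²P)⁻¹ v‖_∞. -/
open Matrix

namespace Matrix

variable {n : Type*} [Fintype n] [DecidableEq n] {P : Matrix n n ℝ}

theorem norm_mulVec_le_of_mem_rowStochastic (hP : P ∈ rowStochastic ℝ n) (x : n → ℝ) :
    ‖P *ᵥ x‖ ≤ ‖x‖ := by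
  refine (pi_norm_le_iff_of_nonneg (norm_nonneg x)).2 fun i => ?_
  calc ‖(P *ᵥ x) i‖ = |∑ j, P i j * x j| := rfl
    _ ≤ ∑ j, |P i j * x j| := Finset.abs_sum_le_sum_abs _ _
    _ ≤ ∑ j, P i j * ‖x‖ := by
        gcongr with j
        rw [abs_mul, abs_of_nonneg (nonneg_of_mem_rowStochastic hP)]
        exact mul_le_mul_of_nonneg_left (norm_le_pi_norm x j) (nonneg_of_mem_rowStochastic hP)
    _ = ‖x‖ := by rw [← Finset.sum_mul, sum_row_of_mem_rowStochastic hP i, one_mul]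

theorem one_sub_mul_norm_le_norm_one_sub_smul_mulVec (hP : P ∈ rowStochastic ℝ n) {c : ℝ}
    (hc : 0 ≤ c) (x : n → ℝ) : (1 - c) * ‖x‖ ≤ ‖(1 - c • P) *ᵥ x‖ := by
  have hPx : ‖c • (P *ᵥ x)‖ ≤ c * ‖x‖ := by
    rw [norm_smul, Real.norm_of_nonneg hc]
    exact mul_le_mul_of_nonneg_left (norm_mulVec_le_of_mem_rowStochastic hP x) hc
  have hx : ‖x‖ ≤ ‖(1 - c • P) *ᵥ x‖ + ‖c • (P *ᵥ x)‖ := by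
    rw [sub_mulVec, one_mulVec, smul_mulVec]
    exact norm_le_norm_sub_add x _
  linarith

theorem isUnit_one_sub_smul_of_mem_rowStochastic (hP : P ∈ rowStochastic ℝ n) {c : ℝ}
    (hc0 : 0 ≤ c) (hc1 : c < 1) : IsUnit (1 - c • P) := by
  rw [← mulVec_injective_iff_isUnit]
  intro x y hxy
  have h := one_sub_mul_norm_le_norm_one_sub_smul_mulVec hP hc0 (x - y)
  rw [mulVec_sub, hxy, sub_self, norm_zero] at h
  have : ‖x - y‖ = 0 := le_antisymm (nonpos_of_mul_nonpos_right h (by linarith)) (norm_nonneg _)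
  exact sub_eq_zero.mp (norm_eq_zero.mp this)

/-- With `w = (1 - a P)⁻¹ v` and `u = (1 - b P)⁻¹ v`, one has `(1 - b P)(w - u) = (a - b) P w`,
so `(1 - b) ‖w - u‖ ≤ (a - b) ‖w‖`. -/
theorem one_sub_mul_norm_inv_mulVec_le (hP : P ∈ rowStochastic ℝ n) {a b : ℝ}
    (hb : 0 ≤ b) (hba : b ≤ a) (ha : a < 1) (v : n → ℝ) :
    (1 - a) * ‖(1 - a • P)⁻¹ *ᵥ v‖ ≤ (1 - b) * ‖(1 - b • P)⁻¹ *ᵥ v‖ := by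
  set w := (1 - a • P)⁻¹ *ᵥ v
  set u := (1 - b • P)⁻¹ *ᵥ v
  have hw : (1 - a • P) *ᵥ w = v := by
    rw [mulVec_mulVec, mul_nonsing_inv _
      ((isUnit_one_sub_smul_of_mem_rowStochastic hP (hb.trans hba) ha).map detMonoidHom),
      one_mulVec]
  have hu : (1 - b • P) *ᵥ u = v := by
    rw [mulVec_mulVec, mul_nonsing_inv _
      ((isUnit_one_sub_smul_of_mem_rowStochastic hP hb (hba.trans_lt ha)).map detMonoidHom),
      one_mulVec]
  have hdiff : (1 - b • P) *ᵥ (w - u) = (a - b) • (P *ᵥ w) := by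
    rw [mulVec_sub, hu, ← hw, sub_mulVec, sub_mulVec, smul_mulVec, smul_mulVec, sub_smul]
    abel
  have hwu : (1 - b) * ‖w - u‖ ≤ (a - b) * ‖w‖ := by
    calc (1 - b) * ‖w - u‖ ≤ ‖(a - b) • (P *ᵥ w)‖ :=
          hdiff ▸ one_sub_mul_norm_le_norm_one_sub_smul_mulVec hP hb (w - u)
      _ ≤ (a - b) * ‖w‖ := by
          rw [norm_smul, Real.norm_of_nonneg (sub_nonneg.2 hba)]
          exact mul_le_mul_of_nonneg_left (norm_mulVec_le_of_mem_rowStochastic hP w)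
            (sub_nonneg.2 hba)
  have htri : (1 - b) * ‖w‖ ≤ (1 - b) * ‖u‖ + (1 - b) * ‖w - u‖ := by
    rw [← mul_add]
    exact mul_le_mul_of_nonneg_left (norm_le_norm_add_norm_sub' w u) (by linarith)
  linarith

end Matrix

theorem stmt2_general {S : Type*} [Fintype S] [DecidableEq S]
    (P : Matrix S S ℝ) (hP0 : ∀ i j, 0 ≤ P i j) (hP1 : ∀ i, ∑ j, P i j = 1)
    (γ : ℝ) (hγ0 : 0 ≤ γ) (hγ1 : γ < 1)
    (v : S → ℝ) :
    ‖(1 - γ • P)⁻¹ *ᵥ v‖ ≤ 2 * ‖(1 - γ ^ 2 • P)⁻¹ *ᵥ v‖ := by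
  have hP : P ∈ rowStochastic ℝ S := mem_rowStochastic_iff_sum.2 ⟨hP0, hP1⟩
  have hγ2 : γ ^ 2 ≤ γ := by nlinarith
  refine le_of_mul_le_mul_left ?_ (sub_pos.2 hγ1)
  calc (1 - γ) * ‖(1 - γ • P)⁻¹ *ᵥ v‖
      ≤ (1 - γ ^ 2) * ‖(1 - γ ^ 2 • P)⁻¹ *ᵥ v‖ :=
        one_sub_mul_norm_inv_mulVec_le hP (sq_nonneg γ) hγ2 hγ1 v
    _ = (1 - γ) * ((1 + γ) * ‖(1 - γ ^ 2 • P)⁻¹ *ᵥ v‖) := by ring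
    _ ≤ (1 - γ) * (2 * ‖(1 - γ ^ 2 • P)⁻¹ *ᵥ v‖) := by gcongr; linarith

/-- For row-stochastic `P`, `γ ∈ [0,1)`, and entrywise-nonnegative `v`:
`‖(I - γP)⁻¹ v‖_∞ ≤ 2 ‖(I - γ²P)⁻¹ v‖_∞`. -/
theorem stmt2 {S : Type*} [Fintype S] [DecidableEq S]
    (P : Matrix S S ℝ) (hP0 : ∀ i j, 0 ≤ P i j) (hP1 : ∀ i, ∑ j, P i j = 1)
    (γ : ℝ) (hγ0 : 0 ≤ γ) (hγ1 : γ < 1)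
    (v : S → ℝ) (hv : ∀ i, 0 ≤ v i) :
    ‖(1 - γ • P)⁻¹ *ᵥ v‖ ≤ 2 * ‖(1 - γ ^ 2 • P)⁻¹ *ᵥ v‖ :=
  stmt2_general P hP0 hP1 γ hγ0 hγ1 v
end

section
/- Let P be a row-stochastic matrix over a finite set, γ ∈ [0,1), and v an entrywise-nonnegative vector, where √v denotes the entrywise square root. Then ‖(I - γP)⁻¹ √v‖_∞ ≤ √( ‖(I - γP)⁻¹ v‖_∞ / (1 - γ) ). -/
/-!
Write `M = (I - γP)⁻¹`. A minimum principle (at a minimal entry of `x`, `P x ≥ x` entrywise)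
shows that `(I - γP) x ≥ 0` forces `x ≥ 0`; hence `I - γP` is invertible and `M` is entrywise
nonnegative, while `(I - γP) 𝟙 = (1 - γ) 𝟙` gives every row of `M` the sum `(1 - γ)⁻¹`.
Each row of `M` is thus a nonnegative weight vector, and Cauchy–Schwarz (Jensen for `√`) on it
bounds `((M √v)ᵢ)²` by `(1 - γ)⁻¹ (M v)ᵢ`.
-/

open Matrix

lemma sq_mulVec_sqrt_le {m n : Type*} [Fintype n] {M : Matrix m n ℝ} (hM : ∀ i j, 0 ≤ M i j)
    {v : n → ℝ} (hv : ∀ j, 0 ≤ v j) (i : m) :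
    (M *ᵥ fun j => √(v j)) i ^ 2 ≤ (∑ j, M i j) * (M *ᵥ v) i := by
  refine Finset.sum_sq_le_sum_mul_sum_of_sq_le_mul _ (fun j _ => hM i j)
    (fun j _ => mul_nonneg (hM i j) (hv j)) fun j _ => ?_
  rw [mul_pow, Real.sq_sqrt (hv j), sq, mul_assoc]

lemma norm_mulVec_sqrt_le {m n : Type*} [Fintype m] [Fintype n] {M : Matrix m n ℝ}
    (hM : ∀ i j, 0 ≤ M i j) {c : ℝ} (hc : ∀ i, ∑ j, M i j ≤ c) {v : n → ℝ} (hv : ∀ j, 0 ≤ v j) :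
    ‖M *ᵥ fun j => √(v j)‖ ≤ √(c * ‖M *ᵥ v‖) := by
  refine (pi_norm_le_iff_of_nonneg (Real.sqrt_nonneg _)).2 fun i => ?_
  have hc0 : 0 ≤ c := (Finset.sum_nonneg fun j _ => hM i j).trans (hc i)
  have hMv : 0 ≤ (M *ᵥ v) i := Finset.sum_nonneg fun j _ => mul_nonneg (hM i j) (hv j)
  rw [Real.norm_eq_abs, ← Real.sqrt_sq_eq_abs]
  refine Real.sqrt_le_sqrt ((sq_mulVec_sqrt_le hM hv i).trans ?_)
  exact mul_le_mul (hc i) ((Real.le_norm_self _).trans (norm_le_pi_norm _ i)) hMv hc0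

section Resolvent

variable {S : Type*} [Fintype S] [DecidableEq S] {P : Matrix S S ℝ} {γ : ℝ}

lemma nonneg_of_nonneg_one_sub_smul_mulVec (hP : P ∈ rowStochastic ℝ S) (hγ0 : 0 ≤ γ)
    (hγ1 : γ < 1) {x : S → ℝ} (hx : ∀ i, 0 ≤ ((1 - γ • P) *ᵥ x) i) (i : S) : 0 ≤ x i := by
  have : Nonempty S := ⟨i⟩
  obtain ⟨k, hk⟩ := Finite.exists_min x
  have hPx : x k ≤ (P *ᵥ x) k :=
    calc x k = ∑ j, P k j * x k := by rw [← Finset.sum_mul, sum_row_of_mem_rowStochastic hP,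
            one_mul]
      _ ≤ (P *ᵥ x) k := Finset.sum_le_sum fun j _ =>
            mul_le_mul_of_nonneg_left (hk j) (nonneg_of_mem_rowStochastic hP)
  have hxk : ((1 - γ • P) *ᵥ x) k = x k - γ * (P *ᵥ x) k := by
    simp [sub_mulVec, smul_mulVec]
  have hk0 : 0 ≤ (1 - γ) * x k := by
    linarith [hxk ▸ hx k, mul_le_mul_of_nonneg_left hPx hγ0]
  exact (nonneg_of_mul_nonneg_right hk0 (sub_pos.2 hγ1)).trans (hk i)

lemma isUnit_one_sub_smul (hP : P ∈ rowStochastic ℝ S) (hγ0 : 0 ≤ γ) (hγ1 : γ < 1) :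
    IsUnit (1 - γ • P) := by
  refine mulVec_injective_iff_isUnit.1 fun x y hxy => funext fun i => ?_
  have hxy' : ∀ i, 0 ≤ ((1 - γ • P) *ᵥ (x - y)) i := by simp [mulVec_sub, hxy]
  have hyx' : ∀ i, 0 ≤ ((1 - γ • P) *ᵥ (y - x)) i := by simp [mulVec_sub, hxy]
  have h₁ := nonneg_of_nonneg_one_sub_smul_mulVec hP hγ0 hγ1 hxy' i
  have h₂ := nonneg_of_nonneg_one_sub_smul_mulVec hP hγ0 hγ1 hyx' i
  simp only [Pi.sub_apply, sub_nonneg] at h₁ h₂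
  exact le_antisymm h₂ h₁

lemma inv_one_sub_smul_nonneg (hP : P ∈ rowStochastic ℝ S) (hγ0 : 0 ≤ γ) (hγ1 : γ < 1)
    (i j : S) : 0 ≤ (1 - γ • P)⁻¹ i j := by
  have hdet := (isUnit_iff_isUnit_det _).1 (isUnit_one_sub_smul hP hγ0 hγ1)
  have hcol : ∀ k, 0 ≤ ((1 - γ • P) *ᵥ ((1 - γ • P)⁻¹ *ᵥ Pi.single j 1)) k := by
    rw [mulVec_mulVec, mul_nonsing_inv _ hdet, one_mulVec]
    intro k
    rw [Pi.single_apply]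
    split_ifs <;> norm_num
  simpa [mulVec_single_one] using nonneg_of_nonneg_one_sub_smul_mulVec hP hγ0 hγ1 hcol i

lemma sum_row_inv_one_sub_smul (hP : P ∈ rowStochastic ℝ S) (hγ0 : 0 ≤ γ) (hγ1 : γ < 1)
    (i : S) : ∑ j, (1 - γ • P)⁻¹ i j = (1 - γ)⁻¹ := by
  have hdet := (isUnit_iff_isUnit_det _).1 (isUnit_one_sub_smul hP hγ0 hγ1)
  have hone : (1 - γ • P) *ᵥ 1 = (1 - γ) • (1 : S → ℝ) := by
    rw [sub_mulVec, one_mulVec, smul_mulVec, one_vecMul_of_mem_rowStochastic hP, sub_smul,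
      one_smul]
  have h := congr_arg ((1 - γ • P)⁻¹ *ᵥ ·) hone
  simp only [mulVec_mulVec, nonsing_inv_mul _ hdet, one_mulVec, mulVec_smul] at h
  have hi := congr_fun h i
  simp only [Pi.one_apply, Pi.smul_apply, smul_eq_mul, mulVec, dotProduct, mul_one] at hi
  exact eq_inv_of_mul_eq_one_right hi.symm

end Resolvent

/-- For row-stochastic `P`, `γ ∈ [0,1)`, and entrywise-nonnegative `v`:
`‖(I - γP)⁻¹ √v‖_∞ ≤ √( ‖(I - γP)⁻¹ v‖_∞ / (1 - γ) )`, where `√v` is the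
entrywise square root. -/
theorem stmt3 {S : Type*} [Fintype S] [DecidableEq S]
    (P : Matrix S S ℝ) (hP0 : ∀ i j, 0 ≤ P i j) (hP1 : ∀ i, ∑ j, P i j = 1)
    (γ : ℝ) (hγ0 : 0 ≤ γ) (hγ1 : γ < 1)
    (v : S → ℝ) (hv : ∀ i, 0 ≤ v i) :
    ‖(1 - γ • P)⁻¹ *ᵥ (fun i => Real.sqrt (v i))‖
      ≤ Real.sqrt (‖(1 - γ • P)⁻¹ *ᵥ v‖ / (1 - γ)) := by
  have hP : P ∈ rowStochastic ℝ S := mem_rowStochastic_iff_sum.2 ⟨hP0, hP1⟩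
  have h := norm_mulVec_sqrt_le (inv_one_sub_smul_nonneg hP hγ0 hγ1)
    (fun i => (sum_row_inv_one_sub_smul hP hγ0 hγ1 i).le) hv
  rwa [mul_comm, ← div_eq_mul_inv] at h
end

section
/- Let M ∈ ℝ^{A×B}, V(u,ϑ) = uᵀMϑ, and suppose the game has a unique pure Nash equilibrium (a*, b*) in the sense that (𝟙_{a*}, 𝟙_{b*}) is a Nash equilibrium of the mixed extension. Let (u, ϑ) be an ε-Nash equilibrium, let gap_A := min_{ϑ'∈Δ(B)} V(𝟙_{a*}, ϑ') − max over mixed u' with u'(a*)=0 of min_{ϑ'} V(u', ϑ') and suppose m_{a b*} ≤ m_{a* b*} − Δ for all a ≠ a* with Δ > 0. Then, using that (u, 𝟙_{b*}) is a 2ε-Nash equilibrium (by interchangeability), the probability u(a*) assigned by u to a* satisfies u(a*) ≥ 1 − 2ε/Δ. -/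
open Finset

/-- The point-mass (pure) mixed strategy at `a`. -/
noncomputable def purePt {A : Type*} [DecidableEq A] (a : A) : A → ℝ :=
  fun a' => if a' = a then 1 else 0

/-! Against `b*`, the loss of `u` relative to `a*` is at least `Δ` times the mass `u` puts off
`a*`; the ε-equilibrium conditions, routed through the pure equilibrium, bound that loss by `2ε`. -/

section Payoff

variable {A B : Type*} [Fintype A] [Fintype B]

def payoff (M : A → B → ℝ) (u : A → ℝ) (ϑ : B → ℝ) : ℝ :=
  ∑ i, ∑ j, u i * M i j * ϑ j

def IsEpsNash (M : A → B → ℝ) (ε : ℝ) (u : A → ℝ) (ϑ : B → ℝ) : Prop :=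
  ∀ u' ∈ stdSimplex ℝ A, ∀ ϑ' ∈ stdSimplex ℝ B,
    payoff M u' ϑ - ε ≤ payoff M u ϑ ∧ payoff M u ϑ ≤ payoff M u ϑ' + ε

/-- Interchangeability: `u` stays `2ε`-good against any column strategy `q` that is optimal
against some row strategy `p`. -/
theorem IsEpsNash.payoff_sub_two_mul_le {M : A → B → ℝ} {ε : ℝ} {u p : A → ℝ} {ϑ q : B → ℝ}
    (h : IsEpsNash M ε u ϑ) (hp : p ∈ stdSimplex ℝ A) (hq : q ∈ stdSimplex ℝ B)
    (hpq : payoff M p q ≤ payoff M p ϑ) :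
    payoff M p q - 2 * ε ≤ payoff M u q := by
  obtain ⟨hrow, hcol⟩ := h p hp q hq
  linarith

end Payoff

section PurePt

variable {A : Type*} [Fintype A] [DecidableEq A]

theorem purePt_mem_stdSimplex (a : A) : purePt a ∈ stdSimplex ℝ A :=
  ⟨fun i => by unfold purePt; split <;> norm_num, by simp [purePt]⟩

theorem sum_purePt_mul (a : A) (f : A → ℝ) : ∑ i, purePt a i * f i = f a := by
  simp [purePt]

theorem sum_mul_purePt (a : A) (f : A → ℝ) : ∑ i, f i * purePt a i = f a := by
  simp [purePt]

theorem stdSimplex_sum_mul_le_of_forall_ne_le {u : A → ℝ} (hu : u ∈ stdSimplex ℝ A)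
    {f : A → ℝ} {a : A} {Δ : ℝ} (hgap : ∀ i, i ≠ a → f i ≤ f a - Δ) :
    ∑ i, u i * f i ≤ f a - (1 - u a) * Δ := by
  have hpoint : ∀ i, u i * f i ≤ u i * (f a - Δ) + Δ * (u i * purePt a i) := fun i => by
    by_cases hi : i = a
    · simp only [purePt, hi, if_true]
      exact le_of_eq (by ring)
    · simpa [purePt, hi] using mul_le_mul_of_nonneg_left (hgap i hi) (hu.1 i)
  calc ∑ i, u i * f i ≤ ∑ i, (u i * (f a - Δ) + Δ * (u i * purePt a i)) :=
        sum_le_sum fun i _ => hpoint i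
    _ = f a - (1 - u a) * Δ := by
        rw [sum_add_distrib, ← sum_mul, ← mul_sum, hu.2, sum_mul_purePt]
        ring

end PurePt

theorem payoff_purePt_right {A B : Type*} [Fintype A] [Fintype B] [DecidableEq B]
    (M : A → B → ℝ) (u : A → ℝ) (b : B) :
    payoff M u (purePt b) = ∑ i, u i * M i b := by
  simp only [payoff, sum_mul_purePt]

theorem stmt17_general {A B : Type*} [Fintype A] [Fintype B]
    [DecidableEq A] [DecidableEq B]
    (M : A → B → ℝ) (astar : A) (bstar : B) (ε Δ : ℝ) (hΔ : 0 < Δ)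
    (u : A → ℝ) (ϑ : B → ℝ) (hu : u ∈ stdSimplex ℝ A) (hϑ : ϑ ∈ stdSimplex ℝ B)
    (hpureNE : ∀ u' ∈ stdSimplex ℝ A, ∀ ϑ' ∈ stdSimplex ℝ B,
      (∑ i, ∑ j, u' i * M i j * purePt bstar j)
          ≤ (∑ i, ∑ j, purePt astar i * M i j * purePt bstar j) ∧
      (∑ i, ∑ j, purePt astar i * M i j * purePt bstar j)
          ≤ (∑ i, ∑ j, purePt astar i * M i j * ϑ' j))
    (hgap : ∀ a, a ≠ astar → M a bstar ≤ M astar bstar - Δ)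
    (hεNE : ∀ u' ∈ stdSimplex ℝ A, ∀ ϑ' ∈ stdSimplex ℝ B,
      (∑ i, ∑ j, u' i * M i j * ϑ j) - ε ≤ (∑ i, ∑ j, u i * M i j * ϑ j) ∧
      (∑ i, ∑ j, u i * M i j * ϑ j) ≤ (∑ i, ∑ j, u i * M i j * ϑ' j) + ε) :
    1 - 2 * ε / Δ ≤ u astar := by
  have hbest : payoff M (purePt astar) (purePt bstar) ≤ payoff M (purePt astar) ϑ :=
    (hpureNE _ (purePt_mem_stdSimplex astar) ϑ hϑ).2
  have hlow : M astar bstar - 2 * ε ≤ ∑ i, u i * M i bstar := by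
    simpa only [payoff_purePt_right, sum_purePt_mul] using
      IsEpsNash.payoff_sub_two_mul_le (M := M) hεNE
        (purePt_mem_stdSimplex astar) (purePt_mem_stdSimplex bstar) hbest
  have hup : ∑ i, u i * M i bstar ≤ M astar bstar - (1 - u astar) * Δ :=
    stdSimplex_sum_mul_le_of_forall_ne_le hu hgap
  rw [sub_le_comm, le_div_iff₀ hΔ]
  linarith

/-- If `(𝟙_{a*}, 𝟙_{b*})` is a pure Nash equilibrium, every action `a ≠ a*`
pays at most `M a* b* − Δ` against `b*`, and `(u, ϑ)` is an `ε`-Nash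
equilibrium, then `u(a*) ≥ 1 − 2ε/Δ`. -/
theorem stmt17 {A B : Type*} [Fintype A] [Fintype B]
    [DecidableEq A] [DecidableEq B]
    (M : A → B → ℝ) (astar : A) (bstar : B) (ε Δ : ℝ) (hε : 0 ≤ ε) (hΔ : 0 < Δ)
    (u : A → ℝ) (ϑ : B → ℝ) (hu : u ∈ stdSimplex ℝ A) (hϑ : ϑ ∈ stdSimplex ℝ B)
    (hpureNE : ∀ u' ∈ stdSimplex ℝ A, ∀ ϑ' ∈ stdSimplex ℝ B,
      (∑ i, ∑ j, u' i * M i j * purePt bstar j)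
          ≤ (∑ i, ∑ j, purePt astar i * M i j * purePt bstar j) ∧
      (∑ i, ∑ j, purePt astar i * M i j * purePt bstar j)
          ≤ (∑ i, ∑ j, purePt astar i * M i j * ϑ' j))
    (hgap : ∀ a, a ≠ astar → M a bstar ≤ M astar bstar - Δ)
    (hεNE : ∀ u' ∈ stdSimplex ℝ A, ∀ ϑ' ∈ stdSimplex ℝ B,
      (∑ i, ∑ j, u' i * M i j * ϑ j) - ε ≤ (∑ i, ∑ j, u i * M i j * ϑ j) ∧
      (∑ i, ∑ j, u i * M i j * ϑ j) ≤ (∑ i, ∑ j, u i * M i j * ϑ' j) + ε) :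
    1 - 2 * ε / Δ ≤ u astar :=
  stmt17_general M astar bstar ε Δ hΔ u ϑ hu hϑ hpureNE hgap hεNE
end
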